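/- arXiv:2601.05972 — 2 statements merged into one kernel-verified Lean document; each statement's English description precedes it below -/
import Mathlib

section
/- For every flat layout L, the layout coal(L) is coalesced, and its layout function agrees with that of L: Φ_{coal(L)}(x) = Φ_L(x) for every x ∈ {0,…,size(L)−1}. -/
/-- A flat layout, represented as its list of modes `(sᵢ, dᵢ)`:
the first component of each mode is a shape entry, the second a stride entry. -/
abbrev FlatLayout := List (ℕ × ℕ)

namespace FlatLayout

/-- Validity of a flat layout: every shape entry is a positive integer. -/
def Valid (L : FlatLayout) : Prop := ∀ p ∈ L, 0 < p.1

/-- The size of a flat layout: the product of its shape entries. -/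
def size (L : FlatLayout) : ℕ := (L.map Prod.fst).prod

/-- The cosize of a flat layout: `1 + Σ (sᵢ - 1) * dᵢ`. -/
def cosize (L : FlatLayout) : ℕ := 1 + (L.map fun p => (p.1 - 1) * p.2).sum

/-- The rank of a flat layout: its number of modes. -/
def rank (L : FlatLayout) : ℕ := L.length

/-- The layout function `Φ_L`: `Φ_L(x) = Σ xᵢ·dᵢ` where
`xᵢ = ⌊x / (s₁⋯sᵢ₋₁)⌋ mod sᵢ`. -/
def phi : FlatLayout → ℕ → ℕ
  | [], _ => 0
  | (s, d) :: rest, x => x % s * d + phi rest (x / s)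

/-- `squeeze L` deletes every mode whose shape entry equals `1`. -/
def squeeze (L : FlatLayout) : FlatLayout := L.filter fun p => p.1 != 1

/-- `filterZeros L` deletes every mode whose stride entry equals `0`. -/
def filterZeros (L : FlatLayout) : FlatLayout := L.filter fun p => p.2 != 0

/-- The ordering on modes: `(s,d) ⪯ (s',d')` iff `d < d'`, or `d = d'` and `s ≤ s'`. -/
def ModeLE (p q : ℕ × ℕ) : Prop := p.2 < q.2 ∨ (p.2 = q.2 ∧ p.1 ≤ q.1)

instance : DecidableRel ModeLE := fun p q => by unfold ModeLE; infer_instance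

/-- A flat layout is sorted if its consecutive modes are `⪯`-increasing. -/
def Sorted (L : FlatLayout) : Prop := L.Chain' ModeLE

/-- `sortL L` stably sorts the modes of `L` with respect to `⪯`. -/
def sortL (L : FlatLayout) : FlatLayout := L.mergeSort fun p q => decide (ModeLE p q)

/-- A flat layout is coalesced if no shape entry equals `1` and
for consecutive modes, `sᵢ·dᵢ ≠ dᵢ₊₁`. -/
def Coalesced (L : FlatLayout) : Prop :=
  (∀ p ∈ L, p.1 ≠ 1) ∧ L.Chain' fun p q => p.1 * p.2 ≠ q.2

/-- Combine adjacent modes `(s,d), (s',d')` with `d' = s·d` into `(s·s', d)`, repeatedly. -/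
def coalAux : List (ℕ × ℕ) → List (ℕ × ℕ)
  | [] => []
  | p :: rest =>
    match coalAux rest with
    | [] => [p]
    | q :: rest' =>
        if p.1 * p.2 = q.2 then (p.1 * q.1, p.2) :: rest' else p :: q :: rest'

/-- Coalesce of a flat layout: squeeze, then repeatedly combine adjacent modes
`(s,d), (s',d')` with `d' = s·d` into `(s·s', d)`. -/
def coal (L : FlatLayout) : FlatLayout := coalAux (squeeze L)

/-- Compactness: the layout function takes values in `{0, …, cosize L - 1}` and induces a
bijection `{0, …, size L - 1} → {0, …, cosize L - 1}`. -/
def Compact (L : FlatLayout) : Prop :=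
  Set.BijOn (phi L) {x | x < size L} {y | y < cosize L}

/-- `B` is a complement of `A` (written `A ⊥ B`) if the concatenation `A ⋆ B` is compact. -/
def Perp (A B : FlatLayout) : Prop := Compact (A ++ B)

/-- `A` is complementable if, writing `sort(squeeze A) = (s₁,…,sₘ):(d₁,…,dₘ)`,
`sᵢ·dᵢ` divides `dᵢ₊₁` for all `1 ≤ i < m`. -/
def Complementable (A : FlatLayout) : Prop :=
  (sortL (squeeze A)).Chain' fun p q => p.1 * p.2 ∣ q.2

/-- `B` is an `N`-complement of `A` if `B` is a complement of `A`
and `size A * size B = N`. -/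
def IsNComplement (A B : FlatLayout) (N : ℕ) : Prop :=
  Perp A B ∧ size A * size B = N

/-- `A` is `N`-complementable if, writing `sort(squeeze A) = (s₁,…,sₘ):(d₁,…,dₘ)`,
`sᵢ·dᵢ ∣ dᵢ₊₁` for all `1 ≤ i < m`, and `sₘ·dₘ ∣ N`. -/
def NComplementable (A : FlatLayout) (N : ℕ) : Prop :=
  ((sortL (squeeze A)).Chain' fun p q => p.1 * p.2 ∣ q.2) ∧
  ∀ p, (sortL (squeeze A)).getLast? = some p → p.1 * p.2 ∣ N

/-- Given `l = [(s₁,d₁),…,(sₘ,dₘ)]`, the layout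
`C = (d₁, d₂/(s₁d₁), …, dₘ/(sₘ₋₁dₘ₋₁)) : (1, s₁d₁, …, sₘ₋₁dₘ₋₁)`. -/
def compModes (l : List (ℕ × ℕ)) : List (ℕ × ℕ) :=
  match l with
  | [] => []
  | (_, d₁) :: t =>
      (d₁, 1) :: (l.zip t).map fun pq => (pq.2.2 / (pq.1.1 * pq.1.2), pq.1.1 * pq.1.2)

/-- The complement `comp A = coal C` of a complementable flat layout `A`. -/
def comp (A : FlatLayout) : FlatLayout := coal (compModes (sortL (squeeze A)))

/-- Given `l = [(s₁,d₁),…,(sₘ,dₘ)]` and `N`, the layout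
`C = (d₁, d₂/(s₁d₁), …, dₘ/(sₘ₋₁dₘ₋₁), N/(sₘdₘ)) : (1, s₁d₁, …, sₘ₋₁dₘ₋₁, sₘdₘ)`. -/
def compNModes (l : List (ℕ × ℕ)) (N : ℕ) : List (ℕ × ℕ) :=
  match l.getLast? with
  | none => [(N, 1)]
  | some (sm, dm) => compModes l ++ [(N / (sm * dm), sm * dm)]

/-- The `N`-complement `comp(A, N) = coal C` of an `N`-complementable flat layout `A`. -/
def compN (A : FlatLayout) (N : ℕ) : FlatLayout :=
  coal (compNModes (sortL (squeeze A)) N)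

/-- `L` is tractable if, writing `sort L = (s₁,…,sₘ):(d₁,…,dₘ)`, for every `1 ≤ i < m`
either `dᵢ = 0` or `sᵢ·dᵢ` divides `dᵢ₊₁`. -/
def Tractable (L : FlatLayout) : Prop :=
  (sortL L).Chain' fun p q => p.2 = 0 ∨ p.1 * p.2 ∣ q.2

end FlatLayout

/-!
Deleting a mode of shape `1` does not change `Φ`, since its coordinate is always `0`. Merging
`(s, d), (s', s·d)` into `(s·s', d)` does not change `Φ` either, because
`x mod (s·s') = x mod s + s·(⌊x/s⌋ mod s')`. `coalAux` merges from the right, so the tail it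
merges into is already coalesced; a merged head `(s·s', d)` stays non-mergeable with the next
mode `(s'', d'')`, since `s·s'·d = s'·(s·d)` and the old head `(s', s·d)` was non-mergeable with it.
-/

namespace FlatLayout

@[simp]
lemma phi_cons (s d : ℕ) (L : FlatLayout) (x : ℕ) :
    phi ((s, d) :: L) x = x % s * d + phi L (x / s) := rfl

lemma phi_squeeze (L : FlatLayout) (x : ℕ) : phi (squeeze L) x = phi L x := by
  induction L generalizing x with
  | nil => rfl
  | cons p L ih =>
    obtain ⟨s, d⟩ := p
    by_cases hs : s = 1
    · subst hs
      simp [squeeze, ← ih, Nat.mod_one x]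
    · simp [squeeze, hs, ← ih]

lemma phi_coalAux (L : FlatLayout) (x : ℕ) : phi (coalAux L) x = phi L x := by
  induction L generalizing x with
  | nil => rfl
  | cons p L ih =>
    obtain ⟨s, d⟩ := p
    cases hc : coalAux L with
    | nil => simp [coalAux, hc, ← ih]
    | cons q L' =>
      obtain ⟨s', d'⟩ := q
      have hphi : ∀ y, phi L y = y % s' * d' + phi L' (y / s') := by
        intro y
        rw [← ih, hc, phi_cons]
      by_cases hm : s * d = d'
      · subst hm
        simp only [coalAux, hc, ↓reduceIte, phi_cons, hphi, Nat.mod_mul, Nat.div_div_eq_div_mul]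
        ring
      · simp [coalAux, hc, hm, hphi]

lemma ne_one_of_mem_coalAux {L : FlatLayout} (hL : ∀ p ∈ L, p.1 ≠ 1) :
    ∀ p ∈ coalAux L, p.1 ≠ 1 := by
  induction L with
  | nil => simp [coalAux]
  | cons p L ih =>
    have hp : p.1 ≠ 1 := hL p List.mem_cons_self
    have htail := ih fun q hq => hL q (List.mem_cons_of_mem _ hq)
    cases hc : coalAux L with
    | nil => simpa [coalAux, hc] using hp
    | cons q L' =>
      rw [hc] at htail
      by_cases hm : p.1 * p.2 = q.2
      · simp only [coalAux, hc, if_pos hm, List.forall_mem_cons]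
        exact ⟨fun h => hp (mul_eq_one.mp h).1, fun r hr => htail r (List.mem_cons_of_mem _ hr)⟩
      · simp only [coalAux, hc, if_neg hm, List.forall_mem_cons]
        exact ⟨hp, List.forall_mem_cons.mp htail⟩

lemma isChain_coalAux (L : FlatLayout) :
    (coalAux L).IsChain fun p q => p.1 * p.2 ≠ q.2 := by
  induction L with
  | nil => exact List.isChain_nil
  | cons p L ih =>
    cases hc : coalAux L with
    | nil => simp only [coalAux, hc, List.isChain_singleton]
    | cons q L' =>
      rw [hc] at ih
      by_cases hm : p.1 * p.2 = q.2
      · simp only [coalAux, hc, if_pos hm]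
        cases L' with
        | nil => exact List.isChain_singleton _
        | cons r L'' =>
          obtain ⟨hqr, hrest⟩ := List.isChain_cons_cons.mp ih
          refine List.isChain_cons_cons.mpr ⟨fun h => hqr ?_, hrest⟩
          rw [← h, ← hm]
          ring
      · simp only [coalAux, hc, if_neg hm]
        exact List.isChain_cons_cons.mpr ⟨hm, ih⟩

lemma coalesced_coalAux {L : FlatLayout} (hL : ∀ p ∈ L, p.1 ≠ 1) : Coalesced (coalAux L) :=
  ⟨ne_one_of_mem_coalAux hL, isChain_coalAux L⟩

lemma ne_one_of_mem_squeeze {L : FlatLayout} : ∀ p ∈ squeeze L, p.1 ≠ 1 := by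
  simp [squeeze]

end FlatLayout

open FlatLayout in
theorem coal_spec_general (L : FlatLayout) :
    Coalesced (coal L) ∧ ∀ x < size L, phi (coal L) x = phi L x :=
  ⟨coalesced_coalAux ne_one_of_mem_squeeze, fun x _ => by rw [coal, phi_coalAux, phi_squeeze]⟩

open FlatLayout in
theorem coal_spec (L : FlatLayout) (hL : L.Valid) :
    Coalesced (coal L) ∧ ∀ x < size L, phi (coal L) x = phi L x :=
  coal_spec_general L
end

section
/- Let A be a complementable flat layout and let B be a flat layout such that (1) A ⊥ B, (2) size(B) = size(comp(A)), (3) B is coalesced, and (4) B is sorted. Then B = comp(A). -/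
/-!
The values of `phi L` on `{0, …, size L - 1}`, counted with multiplicity, do not change when the
modes of `L` are permuted or modes of shape `1` are dropped. Compactness of `A ⋆ B` says that they
form the interval `{0, …, size - 1}` without repetition, so the same holds for
`M = sort (squeeze (A ⋆ B))`, and this forces `M` to be column-major: its strides are
`1, s₁, s₁ s₂, …`. The modes of `sort (squeeze A)` and of `B` split `M`. Walking along `M`, a mode
of `B` cannot be followed by another mode of `B` (`B` is coalesced), so it is followed by a mode of
`A` and fills exactly the gap before it, which is the corresponding mode of `comp A`; a mode of `B`
after the last mode of `A` would make `size B` exceed `size (comp A)`.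
-/

namespace FlatLayout

lemma ModeLE.snd_le {p q : ℕ × ℕ} (h : ModeLE p q) : p.2 ≤ q.2 := by
  rcases h with h | h <;> omega

lemma modeLE_trans {p q r : ℕ × ℕ} (hpq : ModeLE p q) (hqr : ModeLE q r) : ModeLE p r := by
  unfold ModeLE at *
  omega

instance : IsTrans (ℕ × ℕ) ModeLE := ⟨fun _ _ _ => modeLE_trans⟩

lemma pairwise_sortL (L : FlatLayout) : (sortL L).Pairwise ModeLE := by
  simpa [sortL] using List.pairwise_mergeSort (le := fun p q => decide (ModeLE p q))
    (fun _ _ _ h₁ h₂ => by simp only [decide_eq_true_eq] at *; exact modeLE_trans h₁ h₂)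
    (fun p q => by simp only [Bool.or_eq_true, decide_eq_true_eq]; unfold ModeLE; omega) L

lemma two_le_of_mem_squeeze {L : FlatLayout} (hL : Valid L) {p : ℕ × ℕ} (hp : p ∈ squeeze L) :
    2 ≤ p.1 := by
  obtain ⟨hpL, hp1⟩ := List.mem_filter.1 hp
  have := hL p hpL
  simp only [bne_iff_ne] at hp1
  omega

def addMode (p : ℕ × ℕ) (V : Multiset ℕ) : Multiset ℕ :=
  (Multiset.range p.1).bind fun x => V.map (x * p.2 + ·)

/-- The multiset of values of `phi L` on `{0, …, size L - 1}` (`values_eq_map_phi`), built mode by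
mode so that it is visibly independent of the order of the modes (`values_perm`). -/
def values (L : FlatLayout) : Multiset ℕ := L.foldr addMode {0}

@[simp] lemma values_nil : values [] = {0} := rfl

@[simp] lemma values_cons (p : ℕ × ℕ) (L : FlatLayout) :
    values (p :: L) = addMode p (values L) := rfl

lemma size_cons (p : ℕ × ℕ) (L : FlatLayout) : size (p :: L) = p.1 * size L := by
  simp [size]

lemma mem_addMode {a : ℕ} {p : ℕ × ℕ} {V : Multiset ℕ} :
    a ∈ addMode p V ↔ ∃ x < p.1, ∃ v ∈ V, a = x * p.2 + v := by
  simp [addMode, eq_comm]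

lemma addMode_eq_map_product (p : ℕ × ℕ) (V : Multiset ℕ) :
    addMode p V = (Multiset.range p.1 ×ˢ V).map fun xv => xv.1 * p.2 + xv.2 := by
  simp [addMode, SProd.sprod, Multiset.product, Multiset.map_bind, Multiset.map_map]

lemma eq_of_nodup_addMode {p : ℕ × ℕ} {V : Multiset ℕ} (hnd : (addMode p V).Nodup)
    {x₁ x₂ v₁ v₂ : ℕ} (hx₁ : x₁ < p.1) (hx₂ : x₂ < p.1) (hv₁ : v₁ ∈ V) (hv₂ : v₂ ∈ V)
    (h : x₁ * p.2 + v₁ = x₂ * p.2 + v₂) : x₁ = x₂ := by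
  rw [addMode_eq_map_product] at hnd
  have := Multiset.inj_on_of_nodup_map hnd (x₁, v₁) (by simp [hx₁, hv₁]) (x₂, v₂)
    (by simp [hx₂, hv₂]) h
  exact congrArg Prod.fst this

lemma addMode_comm (p q : ℕ × ℕ) (V : Multiset ℕ) :
    addMode p (addMode q V) = addMode q (addMode p V) := by
  simp only [addMode, Multiset.map_bind, Multiset.map_map, Function.comp_def]
  rw [Multiset.bind_bind]
  refine Multiset.bind_congr fun _ _ => Multiset.bind_congr fun _ _ => ?_
  exact Multiset.map_congr rfl fun _ _ => by ring

instance : LeftCommutative addMode := ⟨addMode_comm⟩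

lemma values_perm {L L' : FlatLayout} (h : L.Perm L') : values L = values L' :=
  h.foldr_eq _

lemma addMode_of_fst_eq_one {p : ℕ × ℕ} (hp : p.1 = 1) (V : Multiset ℕ) : addMode p V = V := by
  simp [addMode, hp]

lemma values_squeeze (L : FlatLayout) : values (squeeze L) = values L := by
  induction L with
  | nil => rfl
  | cons p t ih =>
    by_cases hp : p.1 = 1
    · simp [squeeze, hp, addMode_of_fst_eq_one hp, ← ih]
    · simp [squeeze, hp, ← ih]

lemma card_values (L : FlatLayout) : Multiset.card (values L) = size L := by
  induction L with
  | nil => simp [size]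
  | cons p t ih => simp [addMode, Multiset.card_bind, size_cons, ih]

lemma bind_range_map_add_mul (s t : ℕ) :
    (Multiset.range t).bind (fun y => (Multiset.range s).map (· + y * s)) =
      Multiset.range (s * t) := by
  induction t with
  | zero => simp
  | succ t ih =>
    rw [Multiset.range_succ, Multiset.cons_bind, ih, Nat.mul_succ, Multiset.range_add, add_comm]
    simp [add_comm, mul_comm]

lemma addMode_addMode_mul (s s' d : ℕ) (V : Multiset ℕ) :
    addMode (s, d) (addMode (s', s * d) V) = addMode (s * s', d) V := by
  simp only [addMode, Multiset.map_bind, Multiset.map_map, Function.comp_def]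
  rw [← bind_range_map_add_mul, Multiset.bind_assoc, Multiset.bind_bind]
  refine Multiset.bind_congr fun _ _ => ?_
  rw [Multiset.bind_map]
  refine Multiset.bind_congr fun _ _ => Multiset.map_congr rfl fun _ _ => by ring

lemma phi_cons_add_mul {s x : ℕ} (hx : x < s) (d y : ℕ) (L : FlatLayout) :
    phi ((s, d) :: L) (x + y * s) = x * d + phi L y := by
  simp only [phi, Nat.add_mul_mod_self_right, Nat.mod_eq_of_lt hx,
    Nat.add_mul_div_right _ _ (Nat.zero_lt_of_lt hx), Nat.div_eq_of_lt hx, zero_add]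

lemma values_eq_map_phi (L : FlatLayout) :
    values L = (Multiset.range (size L)).map (phi L) := by
  induction L with
  | nil => rfl
  | cons p t ih =>
    obtain ⟨s, d⟩ := p
    rw [values_cons, ih, size_cons, ← bind_range_map_add_mul, Multiset.map_bind, addMode]
    simp only [Multiset.map_map, Function.comp_def]
    rw [Multiset.bind_map_comm]
    exact Multiset.bind_congr fun y _ => Multiset.map_congr rfl fun x hx => by
      rw [phi_cons_add_mul (Multiset.mem_range.1 hx)]

lemma Compact.values_eq_range {L : FlatLayout} (h : Compact L) :
    values L = Multiset.range (size L) := by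
  have hinj : Set.InjOn (phi L) ↑(Finset.range (size L)) := by
    simpa [Finset.coe_range, Set.Iio_def] using h.injOn
  have himage : (Finset.range (size L)).image (phi L) = Finset.range (cosize L) := by
    simpa [← Finset.coe_inj, Finset.coe_range, Set.Iio_def] using h.image_eq
  have hsize : size L = cosize L := by
    simpa [himage] using (Finset.card_image_of_injOn hinj).symm
  rw [values_eq_map_phi, ← Finset.range_val, ← Finset.image_val_of_injOn hinj, himage, hsize]

lemma size_pos {L : FlatLayout} (h : ∀ p ∈ L, 0 < p.1) : 0 < size L :=
  List.prod_pos fun a ha => by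
    obtain ⟨p, hp, rfl⟩ := List.mem_map.1 ha
    exact h p hp

lemma zero_mem_values {L : FlatLayout} (h : ∀ p ∈ L, 0 < p.1) : 0 ∈ values L := by
  induction L with
  | nil => simp
  | cons p t ih =>
    exact mem_addMode.2 ⟨0, h p (.head _), 0, ih fun q hq => h q (.tail _ hq), by simp⟩

lemma eq_zero_or_le_of_mem_values {L : FlatLayout} {c : ℕ} (h : ∀ p ∈ L, c ≤ p.2) :
    ∀ v ∈ values L, v = 0 ∨ c ≤ v := by
  induction L with
  | nil => simp
  | cons p t ih =>
    intro v hv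
    obtain ⟨x, -, v', hv', rfl⟩ := mem_addMode.1 hv
    have hcp := h p (.head _)
    rcases ih (fun q hq => h q (.tail _ hq)) v' hv' with rfl | hc
    · rcases x with _ | x
      · simp
      · right; nlinarith
    · right; omega

lemma snd_eq_one_of_values_eq_range {s d : ℕ} {t : FlatLayout}
    (hsort : ((s, d) :: t).Pairwise ModeLE) (hshape : ∀ p ∈ (s, d) :: t, 2 ≤ p.1)
    (hval : values ((s, d) :: t) = Multiset.range (size ((s, d) :: t))) : d = 1 := by
  have hs : 2 ≤ s := hshape _ (.head _)
  have hpos : ∀ p ∈ t, 0 < p.1 := fun p hp => by have := hshape p (.tail _ hp); omega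
  have hnd : (addMode (s, d) (values t)).Nodup := by
    rw [← values_cons, hval]
    exact Multiset.nodup_range _
  have hd : d ≠ 0 := fun hd => by
    have := eq_of_nodup_addMode hnd (x₁ := 0) (x₂ := 1) (by omega) (by omega)
      (zero_mem_values hpos) (zero_mem_values hpos) (by simp [hd])
    omega
  have h1 : 1 ∈ addMode (s, d) (values t) := by
    rw [← values_cons, hval, Multiset.mem_range, size_cons]
    dsimp only
    nlinarith [size_pos hpos]
  obtain ⟨x, -, v, hv, h⟩ := mem_addMode.1 h1
  have hlb := eq_zero_or_le_of_mem_values fun q hq =>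
    ModeLE.snd_le (List.rel_of_pairwise_cons hsort hq)
  rcases hlb v hv with rfl | hdv
  · exact Nat.eq_one_of_mul_eq_one_left (by simpa using h.symm)
  · omega

lemma snd_eq_of_values_eq_range {s₁ s₂ d : ℕ} {t : FlatLayout}
    (hsort : ((s₁, 1) :: (s₂, d) :: t).Pairwise ModeLE)
    (hshape : ∀ p ∈ (s₁, 1) :: (s₂, d) :: t, 2 ≤ p.1)
    (hval : values ((s₁, 1) :: (s₂, d) :: t) = Multiset.range (size ((s₁, 1) :: (s₂, d) :: t))) :
    d = s₁ := by
  have hs₂ : 2 ≤ s₂ := hshape _ (.tail _ (.head _))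
  have hpos : ∀ p ∈ t, 0 < p.1 := fun p hp => by have := hshape p (.tail _ (.tail _ hp)); omega
  have hd : 1 ≤ d := ModeLE.snd_le (List.rel_of_pairwise_cons hsort (.head _))
  have hnd : (addMode (s₁, 1) (values ((s₂, d) :: t))).Nodup := by
    rw [← values_cons, hval]
    exact Multiset.nodup_range _
  have hdV : d ∈ values ((s₂, d) :: t) :=
    mem_addMode.2 ⟨1, by omega, 0, zero_mem_values hpos, by simp⟩
  have hlb : ∀ v ∈ values ((s₂, d) :: t), v = 0 ∨ d ≤ v := by
    refine eq_zero_or_le_of_mem_values fun q hq => ?_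
    rcases List.mem_cons.1 hq with rfl | hq
    · rfl
    · exact ModeLE.snd_le (List.rel_of_pairwise_cons (List.pairwise_cons.1 hsort).2 hq)
  rcases lt_trichotomy d s₁ with hlt | heq | hgt
  · have := eq_of_nodup_addMode hnd (x₂ := 0) hlt (by omega)
      (zero_mem_values fun p hp => by have := hshape p (.tail _ hp); omega) hdV (by simp)
    omega
  · exact heq
  · have hs₁ : s₁ ∈ addMode (s₁, 1) (values ((s₂, d) :: t)) := by
      rw [← values_cons, hval, Multiset.mem_range, size_cons, size_cons]
      have hs₁ : 2 ≤ s₁ := hshape _ (.head _)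
      have : 2 ≤ s₂ * size t := by nlinarith [size_pos hpos]
      dsimp only
      nlinarith
    obtain ⟨x, hx, v, hv, h⟩ := mem_addMode.1 hs₁
    rcases hlb v hv with rfl | hdv <;> simp at h <;> omega

def IsColMajor : ℕ → FlatLayout → Prop
  | _, [] => True
  | w, (s, d) :: t => d = w ∧ IsColMajor (s * w) t

theorem isColMajor_of_values_eq_range : ∀ {L : FlatLayout}, L.Pairwise ModeLE →
    (∀ p ∈ L, 2 ≤ p.1) → values L = Multiset.range (size L) → IsColMajor 1 L
  | [], _, _, _ => trivial
  | [(_, _)], hsort, hshape, hval => ⟨snd_eq_one_of_values_eq_range hsort hshape hval, trivial⟩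
  | (s₁, d₁) :: (s₂, d₂) :: t, hsort, hshape, hval => by
    obtain rfl := snd_eq_one_of_values_eq_range hsort hshape hval
    obtain rfl := (snd_eq_of_values_eq_range hsort hshape hval).symm
    have hsort' := (List.pairwise_cons.1 (List.pairwise_cons.1 hsort).2)
    -- the first two modes `(s₁, 1), (s₂, s₁)` merge into `(s₁ * s₂, 1)`
    have hrec : IsColMajor 1 ((s₁ * s₂, 1) :: t) := by
      refine isColMajor_of_values_eq_range ?_ ?_ ?_
      · refine List.pairwise_cons.2 ⟨fun q hq => Or.inl ?_, hsort'.2⟩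
        have := ModeLE.snd_le (hsort'.1 q hq)
        have := hshape _ (.head _)
        simp only at this ⊢
        omega
      · intro q hq
        rcases List.mem_cons.1 hq with rfl | hq
        · nlinarith [hshape _ (.head _), hshape _ (.tail _ (.head _))]
        · exact hshape q (.tail _ (.tail _ hq))
      · have := addMode_addMode_mul s₁ s₂ 1 (values t)
        rw [mul_one] at this
        rw [values_cons, ← this, ← values_cons, ← values_cons, hval]
        simp only [size_cons, mul_assoc]
    exact ⟨rfl, by simp, by simpa [mul_comm] using hrec.2⟩
termination_by L => L.length

lemma size_coalAux : ∀ L : FlatLayout, size (coalAux L) = size L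
  | [] => rfl
  | p :: rest => by
    have ih := size_coalAux rest
    simp only [coalAux]
    split
    · next h =>
      rw [h] at ih
      rw [size_cons, size_cons, ← ih]
    · next q rest' h =>
      rw [h, size_cons] at ih
      split_ifs <;> simp [size_cons, ← ih, mul_assoc]

lemma coalAux_eq_self : ∀ {L : FlatLayout}, L.IsChain (fun p q => p.1 * p.2 ≠ q.2) →
    coalAux L = L
  | [], _ => rfl
  | [_], _ => rfl
  | p :: q :: rest, h => by
    have ih := coalAux_eq_self (List.isChain_cons_cons.1 h).2
    simp only [coalAux] at ih ⊢
    rw [ih]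
    simp [(List.isChain_cons_cons.1 h).1]

def gapModes : ℕ → FlatLayout → FlatLayout
  | _, [] => []
  | w, (a, e) :: t => (e / w, w) :: gapModes (a * e) t

lemma map_zip_eq_gapModes : ∀ (a e : ℕ) (t : FlatLayout),
    ((((a, e) :: t).zip t).map fun pq => (pq.2.2 / (pq.1.1 * pq.1.2), pq.1.1 * pq.1.2)) =
      gapModes (a * e) t
  | _, _, [] => rfl
  | a, e, (a', e') :: t => by
    simp only [List.zip_cons_cons, List.map_cons, gapModes, map_zip_eq_gapModes a' e' t]

lemma compModes_eq_gapModes : ∀ l : FlatLayout, compModes l = gapModes 1 l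
  | [] => rfl
  | (a, e) :: t => by simp [compModes, gapModes, map_zip_eq_gapModes]

lemma IsColMajor.le_snd : ∀ {w : ℕ} {M : FlatLayout}, IsColMajor w M →
    (∀ p ∈ M, 0 < p.1) → ∀ q ∈ M, w ≤ q.2
  | _, [], _, _ => by simp
  | w, (s, d) :: t, h, hpos => by
    have hs := hpos _ (.head _)
    have ih := h.2.le_snd fun p hp => hpos p (.tail _ hp)
    rintro q (_ | ⟨_, hq⟩)
    · exact h.1.ge
    · exact le_trans (Nat.le_mul_of_pos_left w hs) (ih q hq)

lemma IsColMajor.snd_lt {w s d : ℕ} {M : FlatLayout} (h : IsColMajor w ((s, d) :: M))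
    (hw : 0 < w) (hshape : ∀ p ∈ (s, d) :: M, 2 ≤ p.1) : ∀ q ∈ M, d < q.2 := fun q hq => by
  have hs : 2 ≤ s := hshape _ (.head _)
  have := h.2.le_snd (fun p hp => by have := hshape p (.tail _ hp); omega) q hq
  rw [h.1]
  nlinarith

lemma exists_eq_cons_of_pairwise {A : FlatLayout} {m : ℕ × ℕ} (hA : A.Pairwise ModeLE)
    (hm : m ∈ A) (hlt : ∀ q ∈ A, q ≠ m → m.2 < q.2) : ∃ A', A = m :: A' := by
  cases A with
  | nil => simp at hm
  | cons a A' =>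
    by_cases ha : a = m
    · exact ⟨A', ha ▸ rfl⟩
    · have hmA' : m ∈ A' := (List.mem_cons.1 hm).resolve_left (Ne.symm ha)
      have := (List.rel_of_pairwise_cons hA hmA').snd_le
      have := hlt a (.head _) ha
      omega

lemma exists_eq_cons_or_exists_eq_cons_of_perm {A B M : FlatLayout} {m : ℕ × ℕ}
    (hA : A.Pairwise ModeLE) (hB : B.Pairwise ModeLE) (h : (A ++ B).Perm (m :: M))
    (hM : ∀ q ∈ M, m.2 < q.2) : (∃ A', A = m :: A') ∨ ∃ B', B = m :: B' := by
  have hlt : ∀ q ∈ A ++ B, q ≠ m → m.2 < q.2 := fun q hq hne =>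
    hM q ((List.mem_cons.1 (h.subset hq)).resolve_left hne)
  rcases List.mem_append.1 (h.symm.subset (.head _)) with hm | hm
  · exact .inl (exists_eq_cons_of_pairwise hA hm fun q hq => hlt q (List.mem_append_left _ hq))
  · exact .inr (exists_eq_cons_of_pairwise hB hm fun q hq => hlt q (List.mem_append_right _ hq))

lemma squeeze_gapModes_cons_self {w : ℕ} (hw : 0 < w) (a : ℕ) (A : FlatLayout) :
    squeeze (gapModes w ((a, w) :: A)) = squeeze (gapModes (a * w) A) := by
  simp [gapModes, squeeze, Nat.div_self hw]

lemma squeeze_gapModes_cons_mul {w σ : ℕ} (hw : 0 < w) (hσ : 1 < σ) (a : ℕ) (A : FlatLayout) :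
    squeeze (gapModes w ((a, σ * w) :: A)) =
      (σ, w) :: squeeze (gapModes (σ * w) ((a, σ * w) :: A)) := by
  simp [gapModes, squeeze, Nat.mul_div_cancel _ hw, Nat.div_self (by positivity : 0 < σ * w),
    hσ.ne']

theorem eq_squeeze_gapModes_of_perm : ∀ {M : FlatLayout} {w : ℕ} {A B : FlatLayout},
    IsColMajor w M → 0 < w → (∀ p ∈ M, 2 ≤ p.1) → A.Pairwise ModeLE → B.Pairwise ModeLE →
    B.IsChain (fun p q => p.1 * p.2 ≠ q.2) → (A ++ B).Perm M →
    size B = size (squeeze (gapModes w A)) → B = squeeze (gapModes w A)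
  | [], _, A, B, _, _, _, _, _, _, hperm, _ => by
    obtain ⟨rfl, rfl⟩ := List.append_eq_nil_iff.1 hperm.eq_nil
    rfl
  | (σ, d) :: M', w, A, B, hcol, hw, hshape, hA, hB, hBc, hperm, hsize => by
    have hlt := hcol.snd_lt hw hshape
    obtain ⟨rfl, hcol'⟩ := hcol
    have hσ : 2 ≤ σ := hshape _ (.head _)
    have hshape' : ∀ p ∈ M', 2 ≤ p.1 := fun p hp => hshape p (.tail _ hp)
    have hσd : 0 < σ * d := by positivity
    rcases exists_eq_cons_or_exists_eq_cons_of_perm hA hB hperm hlt with ⟨A', rfl⟩ | ⟨B', rfl⟩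
    · rw [squeeze_gapModes_cons_self hw] at hsize ⊢
      exact eq_squeeze_gapModes_of_perm hcol' hσd hshape' (List.pairwise_cons.1 hA).2 hB hBc
        hperm.cons_inv hsize
    · have hperm' : (A ++ B').Perm M' := (List.perm_middle.symm.trans hperm).cons_inv
      cases M' with
      | nil =>
        obtain ⟨rfl, rfl⟩ := List.append_eq_nil_iff.1 hperm'.eq_nil
        simp [size, gapModes, squeeze] at hsize
        omega
      | cons m M'' =>
        obtain ⟨σ₂, d₂⟩ := m
        obtain ⟨rfl, -⟩ := id hcol'
        rcases exists_eq_cons_or_exists_eq_cons_of_perm hA (List.pairwise_cons.1 hB).2 hperm'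
          (hcol'.snd_lt hσd hshape') with ⟨A', rfl⟩ | ⟨B'', rfl⟩
        · rw [squeeze_gapModes_cons_mul hw (by omega), size_cons, size_cons] at hsize
          rw [squeeze_gapModes_cons_mul hw (by omega)]
          exact congrArg _ (eq_squeeze_gapModes_of_perm hcol' hσd hshape' hA
            (List.pairwise_cons.1 hB).2 hBc.tail hperm'
            (Nat.eq_of_mul_eq_mul_left (by omega) hsize))
        -- two consecutive modes of `M` in `B` would contradict that `B` is coalesced
        · exact absurd rfl (List.isChain_cons_cons.1 hBc).1
termination_by M => M.length

end FlatLayout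

open FlatLayout in
theorem complement_unique_general (A B : FlatLayout) (hA : A.Valid)
    (hB : B.Valid) (h1 : Perp A B) (h2 : size B = size (comp A))
    (h3 : Coalesced B) (h4 : Sorted B) :
    B = comp A := by
  set A' := sortL (squeeze A)
  have hsqB : squeeze B = B := List.filter_eq_self.2 fun p hp => by simpa using h3.1 p hp
  have hperm : (A' ++ B).Perm (squeeze (A ++ B)) := by
    rw [squeeze, List.filter_append, ← squeeze, ← squeeze, hsqB]
    exact (List.mergeSort_perm _ _).append_right B
  set M := sortL (A' ++ B)
  have hM : (A' ++ B).Perm M := (List.mergeSort_perm _ _).symm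
  have hshape : ∀ p ∈ M, 2 ≤ p.1 := fun p hp =>
    two_le_of_mem_squeeze (List.forall_mem_append.2 ⟨hA, hB⟩) ((hM.symm.trans hperm).subset hp)
  have hval : values M = values (A ++ B) := by
    rw [← values_perm hM, values_perm hperm, values_squeeze]
  have hcol : IsColMajor 1 M := isColMajor_of_values_eq_range (pairwise_sortL _) hshape (by
    rw [← card_values, hval, Compact.values_eq_range h1, Multiset.card_range])
  have hB' : B = squeeze (gapModes 1 A') :=
    eq_squeeze_gapModes_of_perm hcol one_pos hshape (pairwise_sortL _) h4.pairwise h3.2 hM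
      (by rw [h2, comp, coal, compModes_eq_gapModes, size_coalAux])
  rw [comp, coal, compModes_eq_gapModes, ← hB', coalAux_eq_self h3.2]

open FlatLayout in
theorem complement_unique (A B : FlatLayout) (hA : A.Valid) (hc : Complementable A)
    (hB : B.Valid) (h1 : Perp A B) (h2 : size B = size (comp A))
    (h3 : Coalesced B) (h4 : Sorted B) :
    B = comp A :=
  complement_unique_general A B hA hB h1 h2 h3 h4
end
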